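/- arXiv:1502.07941 — 6 statements merged into one kernel-verified Lean document; each statement's English description precedes it below -/
import Mathlib

section
/- Let n be a prime power, let d_1, d_2, d_3 divide n+1, and let M = gcd(d_1, d_2, d_3(n^2-n+1)). Then the expression g = 1 + (1/2)[d_1 d_2 (d_3(n^2-n+1)/M)(n-1) - d_2·gcd(d_1/M, d_3(n^2-n+1)/M) - d_1·gcd(d_2/M, d_3(n^2-n+1)/M) - d_1 d_2 (n-2)·gcd(d_3(n^2-n+1)/M, (n+1)/M) - gcd(gcd(d_1,d_2)·d_3(n^2-n+1)/M, 2 d_1 d_2 / M)] is a nonnegative integer (in particular the bracketed quantity is an even nonnegative integer) whenever M divides each of d_1, d_2, n+1, and d_3(n^2-n+1). -/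
/-!
Write `T = d₃(n² - n + 1)` and `d₁ = M a`, `d₂ = M b`, `T = M t`, `n + 1 = M s`; then every
division in the bracket is exact.

Parity: modulo 2 one has `gcd x y ≡ x + y + x y`, so the bracket reduces to a polynomial over
`ZMod 2`. It vanishes identically once one knows that for even `n` the divisors `d₁, d₂, d₃` of
`n + 1` (hence also `M, a, b, t`) are odd.

Sign: bounding `gcd a t ≤ a`, `gcd b t ≤ b`, `gcd t s ≤ s` and the last gcd by `2 a d₂` shows that
the bracket is at least `M a b (T (n - 1) - (n - 2)(n + 1) - 4)`, and
`(n² - n + 1)(n - 1) - (n - 2)(n + 1) - 4 = (n - 1)³ - 2 ≥ 0` for `n ≥ 3`. For `n = 2` the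
`d_i` lie in `{1, 3}` and the eight cases are checked directly.
-/

theorem ZMod.natCast_intGcd_two (x y : ℤ) :
    (Int.gcd x y : ZMod 2) = x + y + x * y := by
  have h : (Int.gcd x y : ZMod 2) = 0 ↔ (x : ZMod 2) = 0 ∧ (y : ZMod 2) = 0 := by
    rw [← Int.cast_natCast]
    simp only [ZMod.intCast_zmod_eq_zero_iff_dvd]
    exact Int.dvd_coe_gcd_iff
  generalize (Int.gcd x y : ZMod 2) = g, (x : ZMod 2) = u, (y : ZMod 2) = v at h ⊢
  revert g u v
  decide

theorem Int.cast_zmod_two_eq_one_of_dvd {x y : ℤ} (h : x ∣ y) (hy : (y : ZMod 2) = 1) :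
    (x : ZMod 2) = 1 := by
  obtain ⟨k, rfl⟩ := h
  push_cast at hy
  generalize (x : ZMod 2) = u, (k : ZMod 2) = v at hy ⊢
  revert u v
  decide

theorem Int.eq_one_or_eq_three_of_dvd_three {d : ℤ} (h : d ∣ 3) (hd : 0 < d) : d = 1 ∨ d = 3 := by
  have := Nat.prime_three.eq_one_or_self_of_dvd _ (Int.natAbs_dvd_natAbs.mpr h)
  omega

def genusBracket (n d₁ d₂ T M : ℤ) : ℤ :=
  d₁ * d₂ * (T / M) * (n - 1) - d₂ * Int.gcd (d₁ / M) (T / M) - d₁ * Int.gcd (d₂ / M) (T / M)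
    - d₁ * d₂ * (n - 2) * Int.gcd (T / M) ((n + 1) / M)
    - Int.gcd (Int.gcd d₁ d₂ * T / M) (2 * d₁ * d₂ / M)

theorem genusBracket_eq {n d₁ d₂ T M a b t s : ℤ} (hM : M ≠ 0) (ha : d₁ = M * a) (hb : d₂ = M * b)
    (ht : T = M * t) (hs : n + 1 = M * s) :
    genusBracket n d₁ d₂ T M = d₁ * d₂ * t * (n - 1) - d₂ * Int.gcd a t - d₁ * Int.gcd b t
      - d₁ * d₂ * (n - 2) * Int.gcd t s - Int.gcd (Int.gcd d₁ d₂ * t) (2 * a * d₂) := by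
  have cancel (x : ℤ) : M * x / M = x := Int.mul_ediv_cancel_left x hM
  have h₁ : d₁ / M = a := ha ▸ cancel a
  have h₂ : d₂ / M = b := hb ▸ cancel b
  have hgcd : Int.gcd d₁ d₂ * T / M = Int.gcd d₁ d₂ * t := by
    rw [ht, mul_left_comm, cancel]
  have hprod : 2 * d₁ * d₂ / M = 2 * a * d₂ := by
    rw [ha, show 2 * (M * a) * d₂ = M * (2 * a * d₂) by ring, cancel]
  rw [genusBracket, h₁, h₂, hgcd, hprod, ht, hs, cancel, cancel]

set_option synthInstance.maxSize 1000 in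
theorem genusBracket_parity_identity : ∀ m a b t s n : ZMod 2, n + 1 = m * s →
    (n = 0 → m * a = 1) → (n = 0 → m * b = 1) → (n = 0 → m * t = 1) →
    m * a * (m * b) * t * (n - 1) - m * b * (a + t + a * t) - m * a * (b + t + b * t)
      - m * a * (m * b) * (n - 2) * (t + s + t * s)
      - ((m * a + m * b + m * a * (m * b)) * t + 2 * a * (m * b)
        + (m * a + m * b + m * a * (m * b)) * t * (2 * a * (m * b))) = 0 := by
  decide

theorem two_dvd_genusBracket {n d₁ d₂ d₃ M a b t s : ℤ} (hM : M ≠ 0) (h₁ : d₁ ∣ n + 1)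
    (h₂ : d₂ ∣ n + 1) (h₃ : d₃ ∣ n + 1) (ha : d₁ = M * a) (hb : d₂ = M * b)
    (ht : d₃ * (n ^ 2 - n + 1) = M * t) (hs : n + 1 = M * s) :
    2 ∣ genusBracket n d₁ d₂ (d₃ * (n ^ 2 - n + 1)) M := by
  rw [genusBracket_eq hM ha hb ht hs]
  apply (ZMod.intCast_zmod_eq_zero_iff_dvd _ 2).mp
  have hodd (hn : (n : ZMod 2) = 0) : ((n + 1 : ℤ) : ZMod 2) = 1 := by simp [hn]
  have key := genusBracket_parity_identity M a b t s n
    (by exact_mod_cast congrArg (Int.cast : ℤ → ZMod 2) hs)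
    (fun hn => by exact_mod_cast ha ▸ Int.cast_zmod_two_eq_one_of_dvd h₁ (hodd hn))
    (fun hn => by exact_mod_cast hb ▸ Int.cast_zmod_two_eq_one_of_dvd h₂ (hodd hn))
    (fun hn => by
      have := congrArg (Int.cast : ℤ → ZMod 2) ht
      push_cast [hn, Int.cast_zmod_two_eq_one_of_dvd h₃ (hodd hn)] at this
      simpa using this.symm)
  push_cast [ZMod.natCast_intGcd_two, ha, hb]
  exact key

theorem genusBracket_nonneg_of_three_le {n d₁ d₂ d₃ M a b t s : ℤ} (hn : 3 ≤ n) (hM : 0 < M)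
    (h₁p : 0 < d₁) (h₂p : 0 < d₂) (h₃p : 0 < d₃) (ha : d₁ = M * a) (hb : d₂ = M * b)
    (ht : d₃ * (n ^ 2 - n + 1) = M * t) (hs : n + 1 = M * s) :
    0 ≤ genusBracket n d₁ d₂ (d₃ * (n ^ 2 - n + 1)) M := by
  rw [genusBracket_eq hM.ne' ha hb ht hs]
  have ha0 : 0 < a := pos_of_mul_pos_right (ha ▸ h₁p) hM.le
  have hb0 : 0 < b := pos_of_mul_pos_right (hb ▸ h₂p) hM.le
  have hs0 : 0 < s := pos_of_mul_pos_right (hs ▸ (by omega : 0 < n + 1)) hM.le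
  have g₁ : (Int.gcd a t : ℤ) ≤ a := Int.le_of_dvd ha0 (Int.gcd_dvd_left _ _)
  have g₂ : (Int.gcd b t : ℤ) ≤ b := Int.le_of_dvd hb0 (Int.gcd_dvd_left _ _)
  have g₃ : (Int.gcd t s : ℤ) ≤ s := Int.le_of_dvd hs0 (Int.gcd_dvd_right _ _)
  have g₄ : (Int.gcd (Int.gcd d₁ d₂ * t) (2 * a * d₂) : ℤ) ≤ 2 * a * d₂ :=
    Int.le_of_dvd (by positivity) (Int.gcd_dvd_right _ _)
  have hcubic : (n - 2) * (n + 1) + 4 ≤ d₃ * (n ^ 2 - n + 1) * (n - 1) := by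
    have hd₃ : (n ^ 2 - n + 1) * (n - 1) ≤ d₃ * (n ^ 2 - n + 1) * (n - 1) := by
      rw [mul_assoc]; exact le_mul_of_one_le_left (by nlinarith) h₃p
    nlinarith [pow_le_pow_left₀ (by omega : (0 : ℤ) ≤ 2) (by omega : 2 ≤ n - 1) 3]
  calc 0 ≤ M * a * b * (d₃ * (n ^ 2 - n + 1) * (n - 1) - (n - 2) * (n + 1) - 4) :=
        mul_nonneg (by positivity) (by linarith)
    _ = d₁ * d₂ * t * (n - 1) - d₂ * a - d₁ * b - d₁ * d₂ * (n - 2) * s - 2 * a * d₂ := by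
        rw [ht, hs, ha, hb]; ring
    _ ≤ _ := by
        gcongr
        exact mul_nonneg (by positivity) (by omega)

theorem genusBracket_two_nonneg {d₁ d₂ d₃ : ℤ} (h₁ : d₁ ∣ 3) (h₂ : d₂ ∣ 3) (h₃ : d₃ ∣ 3)
    (h₁p : 0 < d₁) (h₂p : 0 < d₂) (h₃p : 0 < d₃) :
    0 ≤ genusBracket 2 d₁ d₂ (d₃ * (2 ^ 2 - 2 + 1))
      (Int.gcd d₁ (Int.gcd d₂ (d₃ * (2 ^ 2 - 2 + 1)))) := by
  rcases Int.eq_one_or_eq_three_of_dvd_three h₁ h₁p with rfl | rfl <;>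
  rcases Int.eq_one_or_eq_three_of_dvd_three h₂ h₂p with rfl | rfl <;>
  rcases Int.eq_one_or_eq_three_of_dvd_three h₃ h₃p with rfl | rfl <;>
  decide

theorem stmt_7_general (n d₁ d₂ d₃ : ℤ) (hn : ∃ p u : ℕ, Nat.Prime p ∧ 1 ≤ u ∧ n = (p : ℤ) ^ u)
    (h₁ : d₁ ∣ n + 1) (h₂ : d₂ ∣ n + 1) (h₃ : d₃ ∣ n + 1)
    (h₁p : 0 < d₁) (h₂p : 0 < d₂) (h₃p : 0 < d₃)
    (M : ℤ) (hM : M = Int.gcd d₁ (Int.gcd d₂ (d₃ * (n ^ 2 - n + 1)))) :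
    (2 : ℤ) ∣ (d₁ * d₂ * (d₃ * (n ^ 2 - n + 1) / M) * (n - 1)
        - d₂ * Int.gcd (d₁ / M) (d₃ * (n ^ 2 - n + 1) / M)
        - d₁ * Int.gcd (d₂ / M) (d₃ * (n ^ 2 - n + 1) / M)
        - d₁ * d₂ * (n - 2) * Int.gcd (d₃ * (n ^ 2 - n + 1) / M) ((n + 1) / M)
        - Int.gcd (Int.gcd d₁ d₂ * (d₃ * (n ^ 2 - n + 1)) / M) (2 * d₁ * d₂ / M)) ∧
    (0 : ℤ) ≤ d₁ * d₂ * (d₃ * (n ^ 2 - n + 1) / M) * (n - 1)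
        - d₂ * Int.gcd (d₁ / M) (d₃ * (n ^ 2 - n + 1) / M)
        - d₁ * Int.gcd (d₂ / M) (d₃ * (n ^ 2 - n + 1) / M)
        - d₁ * d₂ * (n - 2) * Int.gcd (d₃ * (n ^ 2 - n + 1) / M) ((n + 1) / M)
        - Int.gcd (Int.gcd d₁ d₂ * (d₃ * (n ^ 2 - n + 1)) / M) (2 * d₁ * d₂ / M) := by
  have hn₂ : 2 ≤ n := by
    obtain ⟨p, u, hp, hu, rfl⟩ := hn
    exact_mod_cast hp.two_le.trans (Nat.le_self_pow (by omega) p)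
  have hM₀ : 0 < M := hM ▸ Int.natCast_pos.mpr (Int.gcd_pos_of_ne_zero_left _ h₁p.ne')
  have hM₁ : M ∣ d₁ := hM ▸ Int.gcd_dvd_left _ _
  have hM₂₃ : M ∣ Int.gcd d₂ (d₃ * (n ^ 2 - n + 1)) := hM ▸ Int.gcd_dvd_right _ _
  obtain ⟨s, hs⟩ := hM₁.trans h₁
  obtain ⟨a, ha⟩ := hM₁
  obtain ⟨b, hb⟩ := hM₂₃.trans (Int.gcd_dvd_left _ _)
  obtain ⟨t, ht⟩ := hM₂₃.trans (Int.gcd_dvd_right _ _)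
  refine ⟨two_dvd_genusBracket hM₀.ne' h₁ h₂ h₃ ha hb ht hs, ?_⟩
  rcases hn₂.eq_or_lt with rfl | hn₃
  · subst hM
    exact genusBracket_two_nonneg h₁ h₂ h₃ h₁p h₂p h₃p
  · exact genusBracket_nonneg_of_three_le hn₃ hM₀ h₁p h₂p h₃p ha hb ht hs

/-- genus formula for `C₁` (Theorem 3.2). For a prime power `n`,
divisors `d₁, d₂, d₃` of `n+1`, and `M = gcd(d₁, d₂, d₃(n^2-n+1))` such that `M`
divides each of `d₁`, `d₂`, `n+1` and `d₃(n^2-n+1)`, the bracketed quantity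
`d₁d₂(d₃(n^2-n+1)/M)(n-1) - d₂ gcd(d₁/M, d₃(n^2-n+1)/M) - d₁ gcd(d₂/M, d₃(n^2-n+1)/M)
 - d₁d₂(n-2) gcd(d₃(n^2-n+1)/M, (n+1)/M) - gcd(gcd(d₁,d₂)d₃(n^2-n+1)/M, 2d₁d₂/M)`
is an even nonnegative integer, so `g = 1 + (1/2)·[...]` is a nonnegative integer. -/
theorem stmt_7 (n d₁ d₂ d₃ : ℤ) (hn : ∃ p u : ℕ, Nat.Prime p ∧ 1 ≤ u ∧ n = (p : ℤ) ^ u)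
    (h₁ : d₁ ∣ n + 1) (h₂ : d₂ ∣ n + 1) (h₃ : d₃ ∣ n + 1)
    (h₁p : 0 < d₁) (h₂p : 0 < d₂) (h₃p : 0 < d₃)
    (M : ℤ) (hM : M = Int.gcd d₁ (Int.gcd d₂ (d₃ * (n ^ 2 - n + 1))))
    (hM₁ : M ∣ d₁) (hM₂ : M ∣ d₂) (hM₃ : M ∣ n + 1) (hM₄ : M ∣ d₃ * (n ^ 2 - n + 1)) :
    (2 : ℤ) ∣ (d₁ * d₂ * (d₃ * (n ^ 2 - n + 1) / M) * (n - 1)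
        - d₂ * Int.gcd (d₁ / M) (d₃ * (n ^ 2 - n + 1) / M)
        - d₁ * Int.gcd (d₂ / M) (d₃ * (n ^ 2 - n + 1) / M)
        - d₁ * d₂ * (n - 2) * Int.gcd (d₃ * (n ^ 2 - n + 1) / M) ((n + 1) / M)
        - Int.gcd (Int.gcd d₁ d₂ * (d₃ * (n ^ 2 - n + 1)) / M) (2 * d₁ * d₂ / M)) ∧
    (0 : ℤ) ≤ d₁ * d₂ * (d₃ * (n ^ 2 - n + 1) / M) * (n - 1)
        - d₂ * Int.gcd (d₁ / M) (d₃ * (n ^ 2 - n + 1) / M)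
        - d₁ * Int.gcd (d₂ / M) (d₃ * (n ^ 2 - n + 1) / M)
        - d₁ * d₂ * (n - 2) * Int.gcd (d₃ * (n ^ 2 - n + 1) / M) ((n + 1) / M)
        - Int.gcd (Int.gcd d₁ d₂ * (d₃ * (n ^ 2 - n + 1)) / M) (2 * d₁ * d₂ / M) :=
  stmt_7_general n d₁ d₂ d₃ hn h₁ h₂ h₃ h₁p h₂p h₃p M hM
end

section
/- Let n ≥ 2 be an integer, h, k positive divisors of n+1, and r = d_3(n^2-n+1) for some divisor d_3 of n+1. Then h·k·r·(n-1) - k·gcd(h,r) - h·gcd(k,r) - h·k·(n-2)·gcd(r, n+1) - gcd(gcd(h,k)·r, 2hk) is an even integer that is ≥ -2. -/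
/-!
Parity: `gcd x y` is odd iff `x` or `y` is, i.e. `gcd x y ≡ x + y + x y (mod 2)`, and with this
the expression becomes an identity in `ZMod 2`, valid for all `n, h, k, r`.

Lower bound: bounding each gcd by its obvious divisor leaves `h k ((n - 1)³ - 2)`, which is
nonnegative for `n ≥ 3`. For `n = 2` all of `h, k, d₃` divide `3`, so `h`, `k` and `r = 3 d₃` are
odd and the last gcd is an odd divisor of `2 h k`, hence at most `h k`, which recovers the missing `h k`.
-/

theorem Int.cast_gcd_zmod_two (x y : ℤ) :
    ((Int.gcd x y : ℤ) : ZMod 2) = x + y + x * y := by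
  have eq_of_zero_iff : ∀ a b : ZMod 2, (a = 0 ↔ b = 0) → a = b := by decide
  have or_eq_zero : ∀ a b : ZMod 2, a + b + a * b = 0 ↔ a = 0 ∧ b = 0 := by decide
  refine eq_of_zero_iff _ _ ?_
  rw [or_eq_zero]
  simp only [ZMod.intCast_zmod_eq_zero_iff_dvd, Nat.cast_ofNat, Int.dvd_coe_gcd_iff]

theorem Int.gcd_two_mul_le_of_odd {a b : ℤ} (ha : Odd a) (hb : 0 < b) :
    (Int.gcd a (2 * b) : ℤ) ≤ b := by
  have hcop : Int.gcd a 2 = 1 :=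
    Int.isCoprime_iff_gcd_eq_one.mp <| IsCoprime.symm <|
      Int.prime_two.coprime_iff_not_dvd.mpr (Int.not_even_iff_odd.mpr ha ∘ even_iff_two_dvd.mpr)
  rw [Int.gcd_mul_right_right_of_gcd_eq_one hcop]
  exact Int.le_of_dvd hb (Int.gcd_dvd_right _ _)

/-- The genus formula of Theorem 3.2 reads `g = 1 + twoGenusSubTwo n h k r / 2`. -/
def twoGenusSubTwo (n h k r : ℤ) : ℤ :=
  h * k * r * (n - 1) - k * Int.gcd h r - h * Int.gcd k r
    - h * k * (n - 2) * Int.gcd r (n + 1) - Int.gcd (Int.gcd h k * r) (2 * h * k)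

theorem two_dvd_twoGenusSubTwo (n h k r : ℤ) : 2 ∣ twoGenusSubTwo n h k r := by
  rw [← Nat.cast_ofNat, ← ZMod.intCast_zmod_eq_zero_iff_dvd]
  simp only [twoGenusSubTwo, Int.cast_sub, Int.cast_mul, Int.cast_add, Int.cast_gcd_zmod_two,
    Int.cast_one, Int.cast_ofNat]
  generalize (n : ZMod 2) = N, (h : ZMod 2) = H, (k : ZMod 2) = K, (r : ZMod 2) = R
  revert N H K R
  decide

theorem mul_le_twoGenusSubTwo {n h k r c : ℤ} (hn : 2 ≤ n) (hh : 0 < h) (hk : 0 < k)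
    (hlast : (Int.gcd (Int.gcd h k * r) (2 * h * k) : ℤ) ≤ c * (h * k)) :
    h * k * (r * (n - 1) - (n - 2) * (n + 1) - 2 - c) ≤ twoGenusSubTwo n h k r := by
  have hhr : (Int.gcd h r : ℤ) ≤ h := Int.le_of_dvd hh (Int.gcd_dvd_left _ _)
  have hkr : (Int.gcd k r : ℤ) ≤ k := Int.le_of_dvd hk (Int.gcd_dvd_left _ _)
  have hrn : (Int.gcd r (n + 1) : ℤ) ≤ n + 1 := Int.le_of_dvd (by omega) (Int.gcd_dvd_right _ _)
  have hhk : 0 ≤ h * k * (n - 2) := mul_nonneg (mul_pos hh hk).le (by omega)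
  unfold twoGenusSubTwo
  nlinarith [mul_le_mul_of_nonneg_left hhr hk.le, mul_le_mul_of_nonneg_left hkr hh.le,
    mul_le_mul_of_nonneg_left hrn hhk]

theorem neg_two_le_twoGenusSubTwo {n h k d r : ℤ} (hn : 2 ≤ n)
    (hh : h ∣ n + 1) (hk : k ∣ n + 1) (hd : d ∣ n + 1) (hhp : 0 < h) (hkp : 0 < k) (hdp : 0 < d)
    (hr : r = d * (n ^ 2 - n + 1)) : -2 ≤ twoGenusSubTwo n h k r := by
  have hhk : 0 < h * k := mul_pos hhp hkp
  obtain rfl | hn3 := hn.eq_or_lt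
  · have odd_of_dvd_three : ∀ {a : ℤ}, a ∣ 2 + 1 → Odd a := fun ha =>
      Int.not_even_iff_odd.mp fun he => absurd ((even_iff_two_dvd.mp he).trans ha) (by decide)
    have hlast : (Int.gcd (Int.gcd h k * r) (2 * h * k) : ℤ) ≤ 1 * (h * k) := by
      rw [one_mul, mul_assoc]
      refine Int.gcd_two_mul_le_of_odd (Int.odd_mul.mpr ⟨?_, ?_⟩) hhk
      · exact odd_of_dvd_three ((Int.gcd_dvd_left _ _).trans hh)
      · rw [hr]
        exact Int.odd_mul.mpr ⟨odd_of_dvd_three hd, by decide⟩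
    have hgap : 0 ≤ r * (2 - 1) - (2 - 2) * (2 + 1) - 2 - 1 := by rw [hr]; omega
    linarith [mul_le_twoGenusSubTwo le_rfl hhp hkp hlast, mul_nonneg hhk.le hgap]
  · have hlast : (Int.gcd (Int.gcd h k * r) (2 * h * k) : ℤ) ≤ 2 * (h * k) := by
      rw [← mul_assoc]
      exact Int.le_of_dvd (by positivity) (Int.gcd_dvd_right _ _)
    have hr' : n ^ 2 - n + 1 ≤ r := by
      rw [hr]; exact le_mul_of_one_le_left (by nlinarith) hdp
    have hgap : 0 ≤ r * (n - 1) - (n - 2) * (n + 1) - 2 - 2 := by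
      nlinarith [mul_le_mul_of_nonneg_right hr' (by omega : (0 : ℤ) ≤ n - 1)]
    linarith [mul_le_twoGenusSubTwo hn hhp hkp hlast, mul_nonneg hhk.le hgap]

/-- for `n ≥ 2`, positive divisors `h, k` of `n+1` and
`r = d₃(n^2-n+1)` with `d₃ ∣ n+1`, the quantity
`hkr(n-1) - k gcd(h,r) - h gcd(k,r) - hk(n-2) gcd(r,n+1) - gcd(gcd(h,k)r, 2hk)`
is an even integer that is `≥ -2`. -/
theorem stmt_8 (n h k d₃ : ℤ) (hn : 2 ≤ n)
    (hh : h ∣ n + 1) (hk : k ∣ n + 1) (hd₃ : d₃ ∣ n + 1)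
    (hhp : 0 < h) (hkp : 0 < k) (hd₃p : 0 < d₃)
    (r : ℤ) (hr : r = d₃ * (n ^ 2 - n + 1)) :
    (2 : ℤ) ∣ (h * k * r * (n - 1) - k * Int.gcd h r - h * Int.gcd k r
        - h * k * (n - 2) * Int.gcd r (n + 1) - Int.gcd (Int.gcd h k * r) (2 * h * k)) ∧
    (-2 : ℤ) ≤ h * k * r * (n - 1) - k * Int.gcd h r - h * Int.gcd k r
        - h * k * (n - 2) * Int.gcd r (n + 1) - Int.gcd (Int.gcd h k * r) (2 * h * k) :=
  ⟨two_dvd_twoGenusSubTwo n h k r, neg_two_le_twoGenusSubTwo hn hh hk hd₃ hhp hkp hd₃p hr⟩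
end

section
/- Let p be a prime, u ≥ 1, n = p^u ≥ 7, and k a divisor of n+1 with 2 ≤ k < √(n+1) + 1. Define h = n+2 if k is even and h = 1 if k is odd. Then there exist no nonnegative integers v, w with v + w = u such that k·(p^{3u-w} + 1) = 2p^{3u} + p^{3u-w} - p^{3u-v} - p^{2u} + h. -/
/-- for a prime `p`, `u ≥ 1`, `n = p^u ≥ 7`, and a divisor `k` of `n+1`
with `2 ≤ k < √(n+1)+1`, setting `h = n+2` if `k` is even and `h = 1` if `k` is odd,
there are no nonnegative integers `v, w` with `v + w = u` and
`k(p^{3u-w}+1) = 2p^{3u} + p^{3u-w} - p^{3u-v} - p^{2u} + h`. -/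
theorem stmt_12 (p u : ℕ) (hp : p.Prime) (hu : 1 ≤ u) (n : ℤ) (hn : n = (p : ℤ) ^ u)
    (hn7 : 7 ≤ n) (k : ℤ) (hk : k ∣ n + 1) (hk2 : 2 ≤ k)
    (hks : (k : ℝ) < Real.sqrt ((n : ℝ) + 1) + 1)
    (h : ℤ) (hh : h = if 2 ∣ k then n + 2 else 1) :
    ¬ ∃ v w : ℕ, v + w = u ∧
      k * ((p : ℤ) ^ (3 * u - w) + 1) =
        2 * (p : ℤ) ^ (3 * u) + (p : ℤ) ^ (3 * u - w) - (p : ℤ) ^ (3 * u - v)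
          - (p : ℤ) ^ (2 * u) + h := by
  rintro ⟨v, w, hvw, heq⟩
  have e1 : 3 * u - w = 2 * u + v := by omega
  have e2 : 3 * u - v = 2 * u + w := by omega
  have e3 : 3 * u = 2 * u + u := by omega
  rw [e1, e2, e3, pow_add, pow_add, pow_add] at heq
  -- key divisibility: p^(2u) ∣ h - k
  have hdvd : ((p : ℤ) ^ (2 * u)) ∣ (h - k) :=
    ⟨k * (p : ℤ) ^ v - 2 * (p : ℤ) ^ u - (p : ℤ) ^ v + (p : ℤ) ^ w + 1, by
      linear_combination -heq⟩
  -- k ≤ n + 1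
  have hnr : (1 : ℝ) ≤ (n : ℝ) + 1 := by
    have : (7 : ℝ) ≤ (n : ℝ) := by exact_mod_cast hn7
    linarith
  have hkle : k ≤ n + 1 := by
    have hs : Real.sqrt ((n : ℝ) + 1) ≤ (n : ℝ) + 1 := by
      have h1 := Real.sq_sqrt (by linarith : (0:ℝ) ≤ (n:ℝ) + 1)
      have h2 := Real.sqrt_nonneg ((n:ℝ) + 1)
      nlinarith
    have : (k : ℝ) < (n : ℝ) + 2 := by linarith
    have : k < n + 2 := by exact_mod_cast this
    omega
  -- h ≠ k and |h - k| ≤ n + 1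
  have hne : h - k ≠ 0 := by
    rcases em (2 ∣ k) with hc | hc <;> simp [hh, hc] <;> omega
  have habs : |h - k| ≤ n + 1 := by
    rw [abs_le]
    rcases em (2 ∣ k) with hc | hc <;> simp [hh, hc] <;> omega
  have hle : ((p : ℤ) ^ (2 * u)) ≤ |h - k| :=
    Int.le_of_dvd (abs_pos.mpr hne) ((dvd_abs _ _).mpr hdvd)
  have hsq : ((p : ℤ) ^ (2 * u)) = n ^ 2 := by
    rw [hn, ← pow_mul, Nat.mul_comm]
  nlinarith [hle, habs, hsq, hn7]
end

section
/- Let p be a prime, u ≥ 1, n = p^u > 3, and k a divisor of n+1 with k < √(n+1)+1 and 3 ∤ (n+1)/k; if 3 | n+1 assume n ≥ 23. Then there exist no nonnegative integers v, w with v+w = u such that k·(p^{3u-w} - p^u - 2) = (1 + gcd(3,k))p^{3u} + p^{3u-w} - p^{3u-v} - p^{2u} - gcd(3,k)·p^u. -/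
/-- for a prime `p`, `u ≥ 1`, `n = p^u > 3`, and a divisor `k` of `n+1`
with `k < √(n+1)+1` and `3 ∤ (n+1)/k` (and `n ≥ 23` if `3 ∣ n+1`), there are no
nonnegative integers `v, w` with `v + w = u` and
`k(p^{3u-w} - p^u - 2) = (1+gcd(3,k))p^{3u} + p^{3u-w} - p^{3u-v} - p^{2u} - gcd(3,k)p^u`. -/
theorem stmt_13 (p u : ℕ) (hp : p.Prime) (hu : 1 ≤ u) (n : ℤ) (hn : n = (p : ℤ) ^ u)
    (hn3 : 3 < n) (k : ℤ) (hk : k ∣ n + 1) (hkp : 0 < k)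
    (hks : (k : ℝ) < Real.sqrt ((n : ℝ) + 1) + 1)
    (h3 : ¬ (3 : ℤ) ∣ (n + 1) / k)
    (h23 : (3 : ℤ) ∣ n + 1 → 23 ≤ n) :
    ¬ ∃ v w : ℕ, v + w = u ∧
      k * ((p : ℤ) ^ (3 * u - w) - (p : ℤ) ^ u - 2) =
        (1 + Int.gcd 3 k) * (p : ℤ) ^ (3 * u) + (p : ℤ) ^ (3 * u - w)
          - (p : ℤ) ^ (3 * u - v) - (p : ℤ) ^ (2 * u)
          - (Int.gcd 3 k : ℤ) * (p : ℤ) ^ u := by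
  rintro ⟨v, w, hvw, heq⟩
  set g : ℤ := (Int.gcd 3 k : ℤ) with hg
  have hw : w ≤ u := by omega
  have hv : v ≤ u := by omega
  have q1 : (p : ℤ) ^ (3 * u - w) = (p : ℤ) ^ u * (p : ℤ) ^ (2 * u - w) := by
    rw [← pow_add]; congr 1; omega
  have q2 : (p : ℤ) ^ (3 * u - v) = (p : ℤ) ^ u * (p : ℤ) ^ (2 * u - v) := by
    rw [← pow_add]; congr 1; omega
  have q3 : (p : ℤ) ^ (3 * u) = (p : ℤ) ^ u * ((p : ℤ) ^ u * (p : ℤ) ^ u) := by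
    rw [← pow_add, ← pow_add]; congr 1; omega
  have q4 : (p : ℤ) ^ (2 * u) = (p : ℤ) ^ u * (p : ℤ) ^ u := by
    rw [← pow_add]; congr 1; omega
  rw [q1, q2, q3, q4] at heq
  -- The key divisibility
  have hdvd : (p : ℤ) ^ u ∣ 2 * k := by
    refine ⟨k * (p : ℤ) ^ (2 * u - w) - k -
      ((1 + g) * ((p : ℤ) ^ u * (p : ℤ) ^ u) + (p : ℤ) ^ (2 * u - w)
        - (p : ℤ) ^ (2 * u - v) - (p : ℤ) ^ u - g), ?_⟩
    linear_combination -heq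
  -- Size bound: k < n
  have hn4 : (4 : ℤ) ≤ n := by omega
  have hn4' : (4 : ℝ) ≤ (n : ℝ) := by exact_mod_cast hn4
  have hsqrt : Real.sqrt ((n : ℝ) + 1) ≤ (n : ℝ) - 1 := by
    calc Real.sqrt ((n : ℝ) + 1) ≤ Real.sqrt (((n : ℝ) - 1) ^ 2) :=
          Real.sqrt_le_sqrt (by nlinarith)
      _ = (n : ℝ) - 1 := Real.sqrt_sq (by linarith)
  have hknR : (k : ℝ) < (n : ℝ) := by linarith
  have hkn : k < n := by exact_mod_cast hknR
  have hppos : (0 : ℤ) < (p : ℤ) ^ u := by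
    have : (0 : ℤ) < (p : ℤ) := by exact_mod_cast hp.pos
    positivity
  -- From the divisibility and bounds, 2k = p^u = n
  obtain ⟨t, ht⟩ := hdvd
  have ht1 : 1 ≤ t := by nlinarith
  have ht2 : t < 2 := by nlinarith [hkn, hn]
  have ht3 : t = 1 := by omega
  rw [ht3, mul_one, ← hn] at ht
  -- Then k ∣ n and k ∣ n+1, so k = 1 and n = 2, contradiction
  have hkdn : k ∣ n := ⟨2, by linarith⟩
  have hk1 : k ∣ 1 := by
    have := dvd_sub hk hkdn
    simpa using this
  have : k = 1 := Int.eq_one_of_dvd_one (le_of_lt hkp) hk1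
  omega
end

section
/- Let p be a prime, u ≥ 1, n = p^u, γ a divisor of n+1 and δ a divisor of n^2-n+1. Suppose either (n = 5, γ = 2, δ = 1), or (n ≥ 7, γ ≤ 2, δ ≤ (√(2γn+1)-1)/2), or (n ≥ 7, γ > 2, γδ(γδ - δ - 1) < n). Then there exist no nonnegative integers v, w with v + w = u such that δ·(p^{3u} - γ·p^{3u-w} + (gcd(2,γ)-1)·p^u - γ + gcd(2,γ)) = -p^{3u} + p^{3u-v} - p^{3u-w} + p^{2u}. -/
/-!
Write `n = S * T` with `S = p ^ w`, `T = p ^ v`, so that the identity becomes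
`δ (n³ - γ n² T + (g - 1) n - γ + g) = -n³ + n² S - n² T + n²` with `g = gcd(2, γ)`.
Reducing modulo `n` gives `n ∣ δ (γ - g)`, which is impossible for `γ > 2` once `δ (γ - g) < n`.
For `γ = 2` reducing modulo `n²` gives `n ∣ δ`, against `δ < n`; for `γ = 1` the left side is
`δ n² (n - T) ≥ 0` while the right side `n² (S + 1 - n - T)` is `≤ 0`, and both vanish only if
`T = 1` and `T = n` at once.
-/

lemma pow_three_mul_sub_eq {M : Type*} [Monoid M] (a : M) {u v w : ℕ} (h : v + w = u) :
    a ^ (3 * u - w) = (a ^ u) ^ 2 * a ^ v := by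
  rw [← pow_mul, ← pow_add]
  congr 1
  omega

def GenusCondition (n S T γ δ g : ℤ) : Prop :=
  δ * (n ^ 3 - γ * (n ^ 2 * T) + (g - 1) * n - γ + g) = -n ^ 3 + n ^ 2 * S - n ^ 2 * T + n ^ 2

namespace GenusCondition

variable {n S T γ δ g : ℤ}

lemma dvd_mul_sub (h : GenusCondition n S T γ δ g) : n ∣ δ * (γ - g) :=
  ⟨δ * n ^ 2 - δ * γ * n * T + δ * (g - 1) + n ^ 2 - n * S + n * T - n, by
    unfold GenusCondition at h; linear_combination -h⟩

lemma dvd_delta_of_two (h : GenusCondition n S T 2 δ 2) (hn : n ≠ 0) : n ∣ δ := by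
  have hdvd : n * n ∣ δ * n :=
    ⟨-δ * n + 2 * δ * T - n + S - T + 1, by unfold GenusCondition at h; linear_combination h⟩
  exact (mul_dvd_mul_iff_right hn).mp hdvd

lemma not_of_one (hS : 0 ≤ S) (hT : 0 ≤ T) (hST : S * T = n) (hn : 1 < n) (hδ : 0 < δ) :
    ¬ GenusCondition n S T 1 δ 1 := by
  intro h
  have hST_pos : 0 < S * T := by omega
  have hS1 : 1 ≤ S := pos_of_mul_pos_left hST_pos hT
  have hT1 : 1 ≤ T := pos_of_mul_pos_right hST_pos hS
  have hreduced : δ * (n - T) = S + 1 - n - T := by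
    have hn2 : n ^ 2 ≠ 0 := by positivity
    apply mul_left_cancel₀ hn2
    unfold GenusCondition at h
    linear_combination h
  nlinarith [mul_nonneg (sub_nonneg.mpr hS1) (sub_nonneg.mpr hT1)]

end GenusCondition

lemma two_mul_mul_add_one_le_of_le_sqrt {δ m : ℤ} (hδ : 0 ≤ δ)
    (h : (δ : ℝ) ≤ (Real.sqrt (2 * (m : ℝ) + 1) - 1) / 2) : 2 * δ * (δ + 1) ≤ m := by
  have hsqrt : 2 * (δ : ℝ) + 1 ≤ Real.sqrt (2 * (m : ℝ) + 1) := by linarith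
  rw [Real.le_sqrt' (by positivity)] at hsqrt
  have : (2 * δ + 1) ^ 2 ≤ 2 * m + 1 := by exact_mod_cast hsqrt
  nlinarith

theorem stmt_14_general (p u : ℕ) (n : ℤ) (hn : n = (p : ℤ) ^ u)
    (γ δ : ℤ) (hγp : 0 < γ) (hδp : 0 < δ)
    (hcase : (n = 5 ∧ γ = 2 ∧ δ = 1) ∨
      (7 ≤ n ∧ γ ≤ 2 ∧ (δ : ℝ) ≤ (Real.sqrt (2 * (γ : ℝ) * (n : ℝ) + 1) - 1) / 2) ∨
      (7 ≤ n ∧ 2 < γ ∧ γ * δ * (γ * δ - δ - 1) < n)) :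
    ¬ ∃ v w : ℕ, v + w = u ∧
      δ * ((p : ℤ) ^ (3 * u) - γ * (p : ℤ) ^ (3 * u - w)
          + ((Int.gcd 2 γ : ℤ) - 1) * (p : ℤ) ^ u - γ + Int.gcd 2 γ) =
        -(p : ℤ) ^ (3 * u) + (p : ℤ) ^ (3 * u - v) - (p : ℤ) ^ (3 * u - w)
          + (p : ℤ) ^ (2 * u) := by
  rintro ⟨v, w, hvw, heq⟩
  have hn5 : 5 ≤ n := by rcases hcase with ⟨h, -⟩ | ⟨h, -⟩ | ⟨h, -⟩ <;> omega
  have hST : (p : ℤ) ^ w * (p : ℤ) ^ v = n := by rw [← pow_add, hn, ← hvw, add_comm]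
  have hcond : GenusCondition n ((p : ℤ) ^ w) ((p : ℤ) ^ v) γ δ (Int.gcd 2 γ) := by
    rw [pow_three_mul_sub_eq _ hvw, pow_three_mul_sub_eq _ (by omega : w + v = u),
      pow_mul', pow_mul', ← hn] at heq
    exact heq
  rcases hcase with ⟨-, rfl, rfl⟩ | ⟨-, hγ2, hδr⟩ | ⟨-, hγ2, hδn⟩
  · have := Int.le_of_dvd one_pos (hcond.dvd_delta_of_two (by omega))
    omega
  · have hδγ : 2 * δ * (δ + 1) ≤ γ * n :=
      two_mul_mul_add_one_le_of_le_sqrt hδp.le (by push_cast; rwa [← mul_assoc])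
    interval_cases γ
    · exact GenusCondition.not_of_one (by positivity) (by positivity) hST (by omega) hδp hcond
    · have := Int.le_of_dvd hδp (hcond.dvd_delta_of_two (by omega))
      nlinarith
  · have hg : (Int.gcd 2 γ : ℤ) ≤ 2 := Int.le_of_dvd two_pos (Int.gcd_dvd_left 2 γ)
    have hle := Int.le_of_dvd (mul_pos hδp (by omega)) hcond.dvd_mul_sub
    have hγδ : 1 ≤ γ * δ - δ - 1 := by nlinarith
    nlinarith [mul_le_mul_of_nonneg_left hγδ (mul_pos (by omega : 0 < γ) hδp).le]

/-- for a prime `p`, `u ≥ 1`, `n = p^u`, `γ ∣ n+1`, `δ ∣ n^2-n+1`,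
under one of the three hypotheses of Theorem 6.4, there are no nonnegative integers
`v, w` with `v + w = u` and
`δ(p^{3u} - γp^{3u-w} + (gcd(2,γ)-1)p^u - γ + gcd(2,γ)) = -p^{3u} + p^{3u-v} - p^{3u-w} + p^{2u}`. -/
theorem stmt_14 (p u : ℕ) (hp : p.Prime) (hu : 1 ≤ u) (n : ℤ) (hn : n = (p : ℤ) ^ u)
    (γ δ : ℤ) (hγ : γ ∣ n + 1) (hδ : δ ∣ n ^ 2 - n + 1) (hγp : 0 < γ) (hδp : 0 < δ)
    (hcase : (n = 5 ∧ γ = 2 ∧ δ = 1) ∨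
      (7 ≤ n ∧ γ ≤ 2 ∧ (δ : ℝ) ≤ (Real.sqrt (2 * (γ : ℝ) * (n : ℝ) + 1) - 1) / 2) ∨
      (7 ≤ n ∧ 2 < γ ∧ γ * δ * (γ * δ - δ - 1) < n)) :
    ¬ ∃ v w : ℕ, v + w = u ∧
      δ * ((p : ℤ) ^ (3 * u) - γ * (p : ℤ) ^ (3 * u - w)
          + ((Int.gcd 2 γ : ℤ) - 1) * (p : ℤ) ^ u - γ + Int.gcd 2 γ) =
        -(p : ℤ) ^ (3 * u) + (p : ℤ) ^ (3 * u - v) - (p : ℤ) ^ (3 * u - w)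
          + (p : ℤ) ^ (2 * u) :=
  stmt_14_general p u n hn γ δ hγp hδp hcase
end

section
/- Let n ≥ 2 and k ≥ 1 be integers with k | n+1, and set h = n+2 if k is even and h = 1 if k is odd. Then n^5 - 2n^3 + n^2 + 2k - 1 - h is divisible by 2k, i.e. g = (n^5 - 2n^3 + n^2 + 2k - 1 - h)/(2k) is an integer. -/
/-- for integers `n ≥ 2` and `k ≥ 1` with `k ∣ n+1`, setting
`h = n+2` if `k` is even and `h = 1` if `k` is odd, the integer
`n^5 - 2n^3 + n^2 + 2k - 1 - h` is divisible by `2k`, i.e. the genus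
`g = (n^5 - 2n^3 + n^2 + 2k - 1 - h)/(2k)` is an integer. -/
theorem stmt_16 (n k : ℤ) (hn : 2 ≤ n) (hk1 : 1 ≤ k) (hk : k ∣ n + 1)
    (h : ℤ) (hh : h = if 2 ∣ k then n + 2 else 1) :
    2 * k ∣ n ^ 5 - 2 * n ^ 3 + n ^ 2 + 2 * k - 1 - h := by
  obtain ⟨m, hm⟩ := hk
  subst hh
  by_cases hke : 2 ∣ k
  · -- k even, so n is odd; write k = 2s, n = 2sm - 1
    rw [if_pos hke]
    obtain ⟨s, hs⟩ := hke
    have hn' : n = 2 * s * m - 1 := by rw [hs] at hm; linarith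
    subst hs hn'
    exact ⟨m * (8*s^4*m^4 - 20*s^3*m^3 + 16*s^2*m^2 - 3*s*m - 2) + 1, by ring⟩
  · rw [if_neg hke]
    rcases Int.even_or_odd n with ⟨t, ht⟩ | ⟨t, ht⟩
    · -- n even: n = 2t
      have hnt : n = 2 * t := by linarith
      subst hnt
      refine ⟨m * (8*t^4 - 4*t^3 - 2*t^2 + 2*t - 1) + 1, ?_⟩
      have : (2*t)^5 - 2*(2*t)^3 + (2*t)^2 - 2 = (2*t + 1) * (2*(8*t^4 - 4*t^3 - 2*t^2 + 2*t - 1)) := by ring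
      linear_combination (2*(8*t^4 - 4*t^3 - 2*t^2 + 2*t - 1)) * hm
    · -- n odd: n + 1 = k * m even, k odd ⇒ m even
      have hm2 : 2 ∣ m := by
        have h2 : (2 : ℤ) ∣ k * m := ⟨t + 1, by linarith⟩
        exact ((Int.prime_two.dvd_mul).mp h2).resolve_left hke
      obtain ⟨u, hu⟩ := hm2
      refine ⟨u * (n^4 - n^3 - n^2 + 2*n - 2) + 1, ?_⟩
      have hm' : n + 1 = k * (2 * u) := by rw [← hu]; exact hm
      linear_combination (n^4 - n^3 - n^2 + 2*n - 2) * hm'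
end
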